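/- Weighted H³ estimate for the modified stream function (Lemma 4.2, estimate (4.9)): There is a universal constant c > 0 such that every sufficiently regular solution ψ₁ of the modified stream-function problem satisfies |(1/r) ∂_r∂_z ψ₁|_{2,Ω} ≤ c |∂_zΓ|_{2,Ω}. -/

import Mathlib

/-!
Common setup: axially symmetric functions on the finite cylinder
`Ω = {x ∈ ℝ³ : x₁² + x₂² < R², |x₃| < a}` are represented in cylindrical
coordinates as functions `u = u(r, z, t)`.  Integration over `Ω` of an
axisymmetric function is integration over `(0,R) × (-a,a)` with respect to
the weighted measure `r dr dz` (the angular factor `2π` is immaterial and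
omitted).
-/

open MeasureTheory Set ENNReal

noncomputable section

/-- `∂_r u` for `u = u(r,z,t)`. -/
def dr (u : ℝ → ℝ → ℝ → ℝ) : ℝ → ℝ → ℝ → ℝ := fun r z t => deriv (fun y => u y z t) r

/-- `∂_z u` for `u = u(r,z,t)`. -/
def dz (u : ℝ → ℝ → ℝ → ℝ) : ℝ → ℝ → ℝ → ℝ := fun r z t => deriv (fun y => u r y t) z

/-- `∂_t u` for `u = u(r,z,t)`. -/
def dt (u : ℝ → ℝ → ℝ → ℝ) : ℝ → ℝ → ℝ → ℝ := fun r z t => deriv (fun y => u r z y) t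

/-- `∂_r u` for a time-independent axisymmetric function `u = u(r,z)`. -/
def pr (u : ℝ → ℝ → ℝ) : ℝ → ℝ → ℝ := fun r z => deriv (fun y => u y z) r

/-- `∂_z u` for a time-independent axisymmetric function `u = u(r,z)`. -/
def pz (u : ℝ → ℝ → ℝ) : ℝ → ℝ → ℝ := fun r z => deriv (fun y => u r y) z

/-- The Laplacian `Δ = ∂_r² + (1/r)∂_r + ∂_z²` on axisymmetric functions. -/
def lapAx (u : ℝ → ℝ → ℝ → ℝ) : ℝ → ℝ → ℝ → ℝ :=
  fun r z t => dr (dr u) r z t + (1 / r) * dr u r z t + dz (dz u) r z t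

/-- The measure `r dr dz` on the cross-section `(0,R) × (-a,a)` of the cylinder:
integration of axisymmetric functions over `Ω`. -/
def cylMeasure (R a : ℝ) : Measure (ℝ × ℝ) :=
  ((volume : Measure (ℝ × ℝ)).restrict (Ioo 0 R ×ˢ Ioo (-a) a)).withDensity
    fun x => ENNReal.ofReal x.1

/-- `|u|_{p,Ω}`: the `L^p(Ω)` norm of an axisymmetric function `u = u(r,z)`. -/
def spNorm (R a : ℝ) (p : ℝ≥0∞) (u : ℝ → ℝ → ℝ) : ℝ :=
  (eLpNorm (fun x : ℝ × ℝ => u x.1 x.2) p (cylMeasure R a)).toReal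

/-- `|u|_{p,q,Ω^t}`: the mixed norm `‖ ‖u(·,t')‖_{L^p(Ω)} ‖_{L^q(0,t)}`. -/
def mixNorm (R a : ℝ) (p q : ℝ≥0∞) (t : ℝ) (u : ℝ → ℝ → ℝ → ℝ) : ℝ :=
  (eLpNorm (fun t' => spNorm R a p fun r z => u r z t') q
    ((volume : Measure ℝ).restrict (Ioo 0 t))).toReal

/-- `|u|_{p,Ω^t}`: the `L^p(Ω × (0,t))` norm. -/
def stNorm (R a : ℝ) (p : ℝ≥0∞) (t : ℝ) (u : ℝ → ℝ → ℝ → ℝ) : ℝ :=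
  mixNorm R a p p t u

/-- `|∇u|` for an axisymmetric scalar function `u`. -/
def gradMag (u : ℝ → ℝ → ℝ → ℝ) : ℝ → ℝ → ℝ → ℝ :=
  fun r z t => Real.sqrt (dr u r z t ^ 2 + dz u r z t ^ 2)

/-- The energy norm `‖u‖_{V(Ω^t)} = |u|_{2,∞,Ω^t} + |∇u|_{2,Ω^t}`. -/
def vNorm (R a t : ℝ) (u : ℝ → ℝ → ℝ → ℝ) : ℝ :=
  mixNorm R a 2 ∞ t u + stNorm R a 2 t (gradMag u)

/-- The `r`-component of the curl of an axisymmetric vector field: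
`(curl w)_r = -∂_z w_φ`. -/
def curlR (wphi : ℝ → ℝ → ℝ → ℝ) : ℝ → ℝ → ℝ → ℝ := fun r z t => -(dz wphi r z t)

/-- The `φ`-component of the curl: `(curl w)_φ = ∂_z w_r - ∂_r w_z`. -/
def curlPhi (wr wz : ℝ → ℝ → ℝ → ℝ) : ℝ → ℝ → ℝ → ℝ :=
  fun r z t => dz wr r z t - dr wz r z t

/-- The `z`-component of the curl: `(curl w)_z = ∂_r w_φ + w_φ/r`. -/
def curlZ (wphi : ℝ → ℝ → ℝ → ℝ) : ℝ → ℝ → ℝ → ℝ :=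
  fun r z t => dr wphi r z t + wphi r z t / r

/-- The anisotropic Sobolev norm `‖u‖_{W₂^{k,k/2}(Ω^t)}` of an axisymmetric
function. -/
def sobNorm (R a : ℝ) (k : ℕ) (t : ℝ) (u : ℝ → ℝ → ℝ → ℝ) : ℝ :=
  Real.sqrt (∑ i ∈ Finset.range (k + 1), ∑ j ∈ Finset.range (k + 1),
    ∑ m ∈ Finset.range (k + 1),
      if i + j + 2 * m ≤ k then (stNorm R a 2 t (dr^[i] (dz^[j] (dt^[m] u)))) ^ 2 else 0)

/-- The spatial Sobolev norm `‖u‖_{H^k(Ω)}` of an axisymmetric function. -/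
def spSobNorm (R a : ℝ) (k : ℕ) (u : ℝ → ℝ → ℝ) : ℝ :=
  Real.sqrt (∑ i ∈ Finset.range (k + 1), ∑ j ∈ Finset.range (k + 1),
    if i + j ≤ k then (spNorm R a 2 (pr^[i] (pz^[j] u))) ^ 2 else 0)

/-- `‖g‖_{L₂(0,t;L₃(S₁))}` for an axisymmetric function `g = g(r,z,t)`, where
`S₁` is the lateral boundary `{r = R}` of the cylinder (surface measure `R dz`). -/
def latNorm (R a t : ℝ) (g : ℝ → ℝ → ℝ → ℝ) : ℝ :=
  (∫ t' in Ioo 0 t,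
    ((∫ z in Ioo (-a) a, |g R z t'| ^ (3 : ℝ) * R) ^ ((1 : ℝ) / 3)) ^ (2 : ℝ)) ^ ((1 : ℝ) / 2)

/-- A regular axially symmetric solution of the Navier–Stokes system
`∂_t v + (v·∇)v − νΔv + ∇p = f`, `div v = 0` in the finite cylinder of radius
`R` and half-height `a`, on the time interval `(0,T)`, written in cylindrical
coordinates (equations (1.7)), with the boundary conditions
`v_r = v_φ = ω_φ = 0` on `S₁` and `v_z = ω_φ = ∂_z v_φ = 0` on `S₂`, smooth up
to the boundary, and satisfying the Liu–Wang expansions near the axis `r = 0`. -/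
structure AxiSol (R a ν T : ℝ) where
  vr : ℝ → ℝ → ℝ → ℝ
  vphi : ℝ → ℝ → ℝ → ℝ
  vz : ℝ → ℝ → ℝ → ℝ
  press : ℝ → ℝ → ℝ → ℝ
  fr : ℝ → ℝ → ℝ → ℝ
  fphi : ℝ → ℝ → ℝ → ℝ
  fz : ℝ → ℝ → ℝ → ℝ
  smooth_vr : ContDiff ℝ (⊤ : ℕ∞) fun x : ℝ × ℝ × ℝ => vr x.1 x.2.1 x.2.2
  smooth_vphi : ContDiff ℝ (⊤ : ℕ∞) fun x : ℝ × ℝ × ℝ => vphi x.1 x.2.1 x.2.2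
  smooth_vz : ContDiff ℝ (⊤ : ℕ∞) fun x : ℝ × ℝ × ℝ => vz x.1 x.2.1 x.2.2
  smooth_press : ContDiff ℝ (⊤ : ℕ∞) fun x : ℝ × ℝ × ℝ => press x.1 x.2.1 x.2.2
  smooth_fr : ContDiff ℝ (⊤ : ℕ∞) fun x : ℝ × ℝ × ℝ => fr x.1 x.2.1 x.2.2
  smooth_fphi : ContDiff ℝ (⊤ : ℕ∞) fun x : ℝ × ℝ × ℝ => fphi x.1 x.2.1 x.2.2
  smooth_fz : ContDiff ℝ (⊤ : ℕ∞) fun x : ℝ × ℝ × ℝ => fz x.1 x.2.1 x.2.2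
  /-- the radial component of the Navier–Stokes equations (1.7)₁ -/
  eq_vr : ∀ r z t, r ∈ Ioo 0 R → z ∈ Ioo (-a) a → t ∈ Ioo 0 T →
    dt vr r z t + vr r z t * dr vr r z t + vz r z t * dz vr r z t -
        vphi r z t ^ 2 / r - ν * lapAx vr r z t + ν * vr r z t / r ^ 2 =
      -(dr press r z t) + fr r z t
  /-- the angular component of the Navier–Stokes equations (1.7)₂ -/
  eq_vphi : ∀ r z t, r ∈ Ioo 0 R → z ∈ Ioo (-a) a → t ∈ Ioo 0 T →
    dt vphi r z t + vr r z t * dr vphi r z t + vz r z t * dz vphi r z t +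
        vr r z t * vphi r z t / r - ν * lapAx vphi r z t + ν * vphi r z t / r ^ 2 =
      fphi r z t
  /-- the axial component of the Navier–Stokes equations (1.7)₃ -/
  eq_vz : ∀ r z t, r ∈ Ioo 0 R → z ∈ Ioo (-a) a → t ∈ Ioo 0 T →
    dt vz r z t + vr r z t * dr vz r z t + vz r z t * dz vz r z t -
        ν * lapAx vz r z t =
      -(dz press r z t) + fz r z t
  /-- the divergence-free condition (1.7)₄ -/
  eq_div : ∀ r z t, r ∈ Ioo 0 R → z ∈ Ioo (-a) a → t ∈ Ioo 0 T →
    dr vr r z t + vr r z t / r + dz vz r z t = 0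
  /-- `v_r = 0` on `S₁` -/
  bc_vr : ∀ z t, z ∈ Icc (-a) a → t ∈ Ioo 0 T → vr R z t = 0
  /-- `v_φ = 0` on `S₁` -/
  bc_vphi : ∀ z t, z ∈ Icc (-a) a → t ∈ Ioo 0 T → vphi R z t = 0
  /-- `ω_φ = 0` on `S₁` -/
  bc_om_S1 : ∀ z t, z ∈ Icc (-a) a → t ∈ Ioo 0 T → curlPhi vr vz R z t = 0
  /-- `v_z = 0` on `S₂` -/
  bc_vz : ∀ r t, r ∈ Ico 0 R → t ∈ Ioo 0 T → vz r a t = 0 ∧ vz r (-a) t = 0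
  /-- `ω_φ = 0` on `S₂` -/
  bc_om_S2 : ∀ r t, r ∈ Ico 0 R → t ∈ Ioo 0 T →
    curlPhi vr vz r a t = 0 ∧ curlPhi vr vz r (-a) t = 0
  /-- `∂_z v_φ = 0` on `S₂` -/
  bc_vphiz : ∀ r t, r ∈ Ico 0 R → t ∈ Ioo 0 T →
    dz vphi r a t = 0 ∧ dz vphi r (-a) t = 0
  /-- Liu–Wang expansion `v_r = a₁(z,t) r + a₂(z,t) r² + …` near the axis -/
  liuWang_vr : ∃ A : ℝ → ℝ → ℝ → ℝ,
    (ContDiff ℝ (⊤ : ℕ∞) fun x : ℝ × ℝ × ℝ => A x.1 x.2.1 x.2.2) ∧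
    ∀ r z t, vr r z t = r * A r z t
  /-- Liu–Wang expansion `v_φ = b₁(z,t) r + b₂(z,t) r² + …` near the axis -/
  liuWang_vphi : ∃ B : ℝ → ℝ → ℝ → ℝ,
    (ContDiff ℝ (⊤ : ℕ∞) fun x : ℝ × ℝ × ℝ => B x.1 x.2.1 x.2.2) ∧
    ∀ r z t, vphi r z t = r * B r z t

namespace AxiSol

variable {R a ν T : ℝ} (s : AxiSol R a ν T)

/-- `|v| = (v_r² + v_φ² + v_z²)^{1/2}`. -/
def vMag : ℝ → ℝ → ℝ → ℝ :=
  fun r z t => Real.sqrt (s.vr r z t ^ 2 + s.vphi r z t ^ 2 + s.vz r z t ^ 2)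

/-- `|f| = (f_r² + f_φ² + f_z²)^{1/2}`. -/
def fMag : ℝ → ℝ → ℝ → ℝ :=
  fun r z t => Real.sqrt (s.fr r z t ^ 2 + s.fphi r z t ^ 2 + s.fz r z t ^ 2)

/-- `|∇v| = (|∇v_r|² + |∇v_φ|² + |∇v_z|²)^{1/2}`. -/
def gradVMag : ℝ → ℝ → ℝ → ℝ :=
  fun r z t =>
    Real.sqrt (gradMag s.vr r z t ^ 2 + gradMag s.vphi r z t ^ 2 + gradMag s.vz r z t ^ 2)

/-- The swirl `u = r v_φ`. -/
def swirl : ℝ → ℝ → ℝ → ℝ := fun r z t => r * s.vphi r z t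

/-- `f₀ = r f_φ`. -/
def f0 : ℝ → ℝ → ℝ → ℝ := fun r z t => r * s.fphi r z t

/-- `ω_r = -∂_z v_φ`. -/
def omR : ℝ → ℝ → ℝ → ℝ := curlR s.vphi

/-- `ω_φ = ∂_z v_r - ∂_r v_z`. -/
def omPhi : ℝ → ℝ → ℝ → ℝ := curlPhi s.vr s.vz

/-- `ω_z = ∂_r v_φ + v_φ/r`. -/
def omZ : ℝ → ℝ → ℝ → ℝ := curlZ s.vphi

/-- `Φ = ω_r/r`. -/
def Phi : ℝ → ℝ → ℝ → ℝ := fun r z t => curlR s.vphi r z t / r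

/-- `Γ = ω_φ/r`. -/
def Gamma : ℝ → ℝ → ℝ → ℝ := fun r z t => curlPhi s.vr s.vz r z t / r

/-- `F_r = (curl f)_r`. -/
def FR : ℝ → ℝ → ℝ → ℝ := curlR s.fphi

/-- `F_φ = (curl f)_φ`. -/
def FPhi : ℝ → ℝ → ℝ → ℝ := curlPhi s.fr s.fz

/-- `F_z = (curl f)_z`. -/
def FZ : ℝ → ℝ → ℝ → ℝ := curlZ s.fphi

/-- `D₁² = 3|f|²_{2,1,Ω^t} + 2|v(0)|²_{2,Ω}`. -/
def D1sq (t : ℝ) : ℝ :=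
  3 * mixNorm R a 2 1 t s.fMag ^ 2 + 2 * spNorm R a 2 (fun r z => s.vMag r z 0) ^ 2

/-- `D₁`. -/
def D1 (t : ℝ) : ℝ := Real.sqrt (s.D1sq t)

/-- `D₂ = |f₀|_{∞,1,Ω^t} + |u(0)|_{∞,Ω}` with `f₀ = r f_φ`, `u = r v_φ`. -/
def D2 (t : ℝ) : ℝ :=
  mixNorm R a ∞ 1 t s.f0 + spNorm R a ∞ (fun r z => s.swirl r z 0)

/-- `D_* = min {1, D₂}`. -/
def Dstar (t : ℝ) : ℝ := min 1 (s.D2 t)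

/-- `D₃ = (2ν)^{-1/2}(|F_r/r|_{6/5,2,Ω^t} + |F_φ/r|_{6/5,2,Ω^t}) + |Φ(0)|_{2,Ω} + |Γ(0)|_{2,Ω}`. -/
def D3 (t : ℝ) : ℝ :=
  1 / Real.sqrt (2 * ν) *
      (mixNorm R a (6 / 5) 2 t (fun r z t' => s.FR r z t' / r) +
        mixNorm R a (6 / 5) 2 t (fun r z t' => s.FPhi r z t' / r)) +
    spNorm R a 2 (fun r z => s.Phi r z 0) + spNorm R a 2 (fun r z => s.Gamma r z 0)

/-- `D₄² = ν^{-1}(D₁²D₂² + |∂_z u(0)|²_{2,Ω} + |f₀|²_{2,Ω^t})`. -/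
def D4sq (t : ℝ) : ℝ :=
  1 / ν * (s.D1sq t * s.D2 t ^ 2 + spNorm R a 2 (fun r z => dz s.swirl r z 0) ^ 2 +
    stNorm R a 2 t s.f0 ^ 2)

/-- `D₄`. -/
def D4 (t : ℝ) : ℝ := Real.sqrt (s.D4sq t)

/-- `D₅² = D₁²(1+D₂) + D₁²D₂² + |∂_r u(0)|²_{2,Ω} + |f₀|²_{2,Ω^t}`. -/
def D5sq (t : ℝ) : ℝ :=
  s.D1sq t * (1 + s.D2 t) + s.D1sq t * s.D2 t ^ 2 +
    spNorm R a 2 (fun r z => dr s.swirl r z 0) ^ 2 + stNorm R a 2 t s.f0 ^ 2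

/-- `D₅`. -/
def D5 (t : ℝ) : ℝ := Real.sqrt (s.D5sq t)

/-- `D₆² = (D₄+D₅)‖f_φ‖_{L₂(0,t;L₃(S₁))} + ν^{-1}(|F_r|²_{6/5,2,Ω^t} + |F_z|²_{6/5,2,Ω^t})
  + |ω_r(0)|²_{2,Ω} + |ω_z(0)|²_{2,Ω}`. -/
def D6sq (t : ℝ) : ℝ :=
  (s.D4 t + s.D5 t) * latNorm R a t s.fphi +
    1 / ν * (mixNorm R a (6 / 5) 2 t s.FR ^ 2 + mixNorm R a (6 / 5) 2 t s.FZ ^ 2) +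
    spNorm R a 2 (fun r z => s.omR r z 0) ^ 2 + spNorm R a 2 (fun r z => s.omZ r z 0) ^ 2

/-- `D₆`. -/
def D6 (t : ℝ) : ℝ := Real.sqrt (s.D6sq t)

/-- `D₇ = √2 D₂^{1/2} |f_φ/r|^{1/2}_{∞,1,Ω^t} + |v_φ(0)|_{∞,Ω}`. -/
def D7 (t : ℝ) : ℝ :=
  Real.sqrt 2 * s.D2 t ^ ((1 : ℝ) / 2) *
      mixNorm R a ∞ 1 t (fun r z t' => s.fphi r z t' / r) ^ ((1 : ℝ) / 2) +
    spNorm R a ∞ (fun r z => s.vphi r z 0)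

/-- `D₈² = max{ν/4, ν²/8, 27/(4ν³), 1/4}`. -/
def D8sq (_sol : AxiSol R a ν T) : ℝ :=
  max (max (ν / 4) (ν ^ 2 / 8)) (max (27 / (4 * ν ^ 3)) (1 / 4))

/-- `D₈`. -/
def D8 (sol : AxiSol R a ν T) : ℝ := Real.sqrt sol.D8sq

/-- `X(t) = ‖Φ‖_{V(Ω^t)} + ‖Γ‖_{V(Ω^t)}`. -/
def X (t : ℝ) : ℝ := vNorm R a t s.Phi + vNorm R a t s.Gamma

/-- `G² = |F₁|²_{6/5,2,Ω^t} + |ω₁(0)|²_{2,Ω} + |r f_φ|⁴_{4,Ω^t} + |v_φ²(0)/r|²_{2,Ω}`,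
with `F₁ = F_φ/r`, `ω₁ = ω_φ/r`. -/
def Gsq (t : ℝ) : ℝ :=
  mixNorm R a (6 / 5) 2 t (fun r z t' => s.FPhi r z t' / r) ^ 2 +
    spNorm R a 2 (fun r z => s.Gamma r z 0) ^ 2 +
    stNorm R a 4 t s.f0 ^ 4 + spNorm R a 2 (fun r z => s.vphi r z 0 ^ 2 / r) ^ 2

/-- `G`. -/
def G (t : ℝ) : ℝ := Real.sqrt (s.Gsq t)

/-- `G₁ = |f_φ|_{∞,1,Ω^t} + |v_φ(0)|_{∞,Ω}`. -/
def G1 (t : ℝ) : ℝ :=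
  mixNorm R a ∞ 1 t s.fphi + spNorm R a ∞ (fun r z => s.vphi r z 0)

end AxiSol

def Sm (u : ℝ → ℝ → ℝ) : Prop := ContDiff ℝ (⊤ : ℕ∞) fun x : ℝ × ℝ => u x.1 x.2

namespace Sm

variable {u : ℝ → ℝ → ℝ}

lemma hasDerivAt_r (hu : Sm u) (r z : ℝ) :
    HasDerivAt (fun y => u y z) (fderiv ℝ (fun x : ℝ × ℝ => u x.1 x.2) (r, z) (1, 0)) r := by
  have h1 : HasFDerivAt (fun x : ℝ × ℝ => u x.1 x.2)
      (fderiv ℝ (fun x : ℝ × ℝ => u x.1 x.2) (r, z)) (r, z) :=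
    (hu.differentiable (by simp) (r, z)).hasFDerivAt
  have h2 : HasDerivAt (fun y : ℝ => (y, z)) ((1 : ℝ), (0 : ℝ)) r :=
    (hasDerivAt_id r).prodMk (hasDerivAt_const r z)
  exact h1.comp_hasDerivAt r h2

lemma hasDerivAt_z (hu : Sm u) (r z : ℝ) :
    HasDerivAt (fun y => u r y) (fderiv ℝ (fun x : ℝ × ℝ => u x.1 x.2) (r, z) (0, 1)) z := by
  have h1 : HasFDerivAt (fun x : ℝ × ℝ => u x.1 x.2)
      (fderiv ℝ (fun x : ℝ × ℝ => u x.1 x.2) (r, z)) (r, z) :=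
    (hu.differentiable (by simp) (r, z)).hasFDerivAt
  have h2 : HasDerivAt (fun y : ℝ => (r, y)) ((0 : ℝ), (1 : ℝ)) z :=
    (hasDerivAt_const z r).prodMk (hasDerivAt_id z)
  exact h1.comp_hasDerivAt z h2

lemma pr_eq (hu : Sm u) (r z : ℝ) :
    pr u r z = fderiv ℝ (fun x : ℝ × ℝ => u x.1 x.2) (r, z) (1, 0) :=
  (hu.hasDerivAt_r r z).deriv

lemma pz_eq (hu : Sm u) (r z : ℝ) :
    pz u r z = fderiv ℝ (fun x : ℝ × ℝ => u x.1 x.2) (r, z) (0, 1) :=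
  (hu.hasDerivAt_z r z).deriv

lemma hasDerivAt_pr (hu : Sm u) (r z : ℝ) :
    HasDerivAt (fun y => u y z) (pr u r z) r := by
  rw [hu.pr_eq]; exact hu.hasDerivAt_r r z

lemma hasDerivAt_pz (hu : Sm u) (r z : ℝ) :
    HasDerivAt (fun y => u r y) (pz u r z) z := by
  rw [hu.pz_eq]; exact hu.hasDerivAt_z r z

lemma smooth_dir (hu : Sm u) (v : ℝ × ℝ) :
    ContDiff ℝ (⊤ : ℕ∞) fun x : ℝ × ℝ => fderiv ℝ (fun x : ℝ × ℝ => u x.1 x.2) x v := by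
  have h : ContDiff ℝ (⊤ : ℕ∞) (fderiv ℝ (fun x : ℝ × ℝ => u x.1 x.2)) := by
    exact hu.fderiv_right (by exact_mod_cast le_top)
  exact h.clm_apply contDiff_const

lemma pr' (hu : Sm u) : Sm (pr u) := by
  have : (fun x : ℝ × ℝ => pr u x.1 x.2)
      = fun x : ℝ × ℝ => fderiv ℝ (fun x : ℝ × ℝ => u x.1 x.2) x (1, 0) := by
    funext x; exact hu.pr_eq x.1 x.2
  rw [Sm, this]; exact hu.smooth_dir (1, 0)

lemma pz' (hu : Sm u) : Sm (pz u) := by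
  have : (fun x : ℝ × ℝ => pz u x.1 x.2)
      = fun x : ℝ × ℝ => fderiv ℝ (fun x : ℝ × ℝ => u x.1 x.2) x (0, 1) := by
    funext x; exact hu.pz_eq x.1 x.2
  rw [Sm, this]; exact hu.smooth_dir (0, 1)

lemma clairaut (hu : Sm u) : pz (pr u) = pr (pz u) := by
  funext r z
  set U := fun x : ℝ × ℝ => u x.1 x.2 with hU
  have hdir : ∀ v : ℝ × ℝ, ∀ r z : ℝ,
      fderiv ℝ (fun x : ℝ × ℝ => fderiv ℝ U x v) (r, z)
        = (fderiv ℝ (fderiv ℝ U) (r, z)).flip v := by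
    intro v r z
    have hc : DifferentiableAt ℝ (fderiv ℝ U) (r, z) := by
      have h : ContDiff ℝ (⊤ : ℕ∞) (fderiv ℝ U) := by
        exact hu.fderiv_right (by exact_mod_cast le_top)
      exact h.differentiable (by simp) (r, z)
    rw [fderiv_clm_apply hc (differentiableAt_const v)]
    simp
  have h1 : pz (pr u) r z = fderiv ℝ (fderiv ℝ U) (r, z) (0, 1) (1, 0) := by
    have e1 : (fun x : ℝ × ℝ => pr u x.1 x.2)
        = fun x : ℝ × ℝ => fderiv ℝ U x (1, 0) := by
      funext x; exact hu.pr_eq x.1 x.2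
    have smv : Sm (pr u) := hu.pr'
    have := smv.pz_eq r z
    rw [this]
    rw [show (fun x : ℝ × ℝ => pr u x.1 x.2) = fun x : ℝ × ℝ => fderiv ℝ U x (1, 0) from e1]
    rw [hdir (1, 0) r z]
    simp [ContinuousLinearMap.flip_apply]
  have h2 : pr (pz u) r z = fderiv ℝ (fderiv ℝ U) (r, z) (1, 0) (0, 1) := by
    have e1 : (fun x : ℝ × ℝ => pz u x.1 x.2)
        = fun x : ℝ × ℝ => fderiv ℝ U x (0, 1) := by
      funext x; exact hu.pz_eq x.1 x.2
    have smv : Sm (pz u) := hu.pz'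
    have := smv.pr_eq r z
    rw [this]
    rw [show (fun x : ℝ × ℝ => pz u x.1 x.2) = fun x : ℝ × ℝ => fderiv ℝ U x (0, 1) from e1]
    rw [hdir (0, 1) r z]
    simp [ContinuousLinearMap.flip_apply]
  rw [h1, h2]
  exact second_derivative_symmetric
    (fun y => (hu.differentiable (by simp) y).hasFDerivAt)
    (((hu.fderiv_right (m := ((⊤:ℕ∞) : WithTop ℕ∞)) (by exact_mod_cast le_top)).differentiable
        (by simp) (r, z)).hasFDerivAt) _ _

lemma cont (hu : Sm u) : Continuous fun x : ℝ × ℝ => u x.1 x.2 := ContDiff.continuous hu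

end Sm

lemma rect_meas (R a : ℝ) : MeasurableSet (Ioo (0:ℝ) R ×ˢ Ioo (-a) a) :=
  measurableSet_Ioo.prod measurableSet_Ioo

lemma integrableOn_rect_of_continuous {f : ℝ × ℝ → ℝ} (hf : Continuous f) (R a : ℝ) :
    IntegrableOn f (Ioo 0 R ×ˢ Ioo (-a) a) := by
  have h : IntegrableOn f (Icc 0 R ×ˢ Icc (-a) a) :=
    hf.continuousOn.integrableOn_compact (isCompact_Icc.prod isCompact_Icc)
  exact h.mono_set (prod_mono Ioo_subset_Icc_self Ioo_subset_Icc_self)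

lemma spNorm_eq_sqrt (R a : ℝ) (u : ℝ → ℝ → ℝ)
    (hm : AEStronglyMeasurable (fun x : ℝ × ℝ => u x.1 x.2)
      ((volume : Measure (ℝ × ℝ)).restrict (Ioo 0 R ×ˢ Ioo (-a) a)))
    (hi : IntegrableOn (fun x : ℝ × ℝ => u x.1 x.2 ^ 2 * x.1) (Ioo 0 R ×ˢ Ioo (-a) a)) :
    spNorm R a 2 u
      = Real.sqrt (∫ x in Ioo 0 R ×ˢ Ioo (-a) a, u x.1 x.2 ^ 2 * x.1) := by
  set s := Ioo (0:ℝ) R ×ˢ Ioo (-a) a with hs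
  set ν := (volume : Measure (ℝ × ℝ)).restrict s with hν
  have hsm : MeasurableSet s := rect_meas R a
  have hae : ∀ᵐ x ∂ν, x ∈ s := ae_restrict_mem hsm
  have hnn : ∀ᵐ x ∂ν, (0:ℝ) ≤ u x.1 x.2 ^ 2 * x.1 := by
    filter_upwards [hae] with x hx
    exact mul_nonneg (sq_nonneg _) (le_of_lt hx.1.1)
  rw [spNorm, cylMeasure,
    eLpNorm_eq_lintegral_rpow_enorm_toReal (two_ne_zero) (ENNReal.ofNat_ne_top)]
  have htR : ((2:ℝ≥0∞)).toReal = (2:ℝ) := by simp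
  rw [htR]
  rw [lintegral_withDensity_eq_lintegral_mul₀ (by fun_prop)
    (by
      have := hm.aemeasurable
      fun_prop)]
  have hcongr : ∫⁻ x, ((fun x : ℝ × ℝ => ENNReal.ofReal x.1)
        * fun x : ℝ × ℝ => ‖u x.1 x.2‖ₑ ^ (2:ℝ)) x ∂ν
      = ∫⁻ x, ENNReal.ofReal (u x.1 x.2 ^ 2 * x.1) ∂ν := by
    refine lintegral_congr_ae ?_
    filter_upwards [hae] with x hx
    simp only [Pi.mul_apply]
    have h1 : ‖u x.1 x.2‖ₑ ^ (2:ℝ) = ENNReal.ofReal (u x.1 x.2 ^ 2) := by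
      rw [← ofReal_norm,
        ENNReal.ofReal_rpow_of_nonneg (norm_nonneg _) (by norm_num)]
      congr 1
      rw [Real.norm_eq_abs, show ((2:ℝ) = ((2:ℕ):ℝ)) from by norm_num,
        Real.rpow_natCast, sq_abs]
    rw [h1, ← ENNReal.ofReal_mul (le_of_lt hx.1.1)]
    ring_nf
  rw [hcongr, ← ofReal_integral_eq_lintegral_ofReal hi hnn,
    ← ENNReal.toReal_rpow, ENNReal.toReal_ofReal (integral_nonneg_of_ae hnn),
    Real.sqrt_eq_rpow]


section Helpers
open intervalIntegral

lemma ioo_int_eq {c d : ℝ} (h : c ≤ d) (g : ℝ → ℝ) :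
    ∫ x in Ioo c d, g x = ∫ x in c..d, g x := by
  rw [intervalIntegral.integral_of_le h, integral_Ioc_eq_integral_Ioo]

lemma rect_iter_rz {R a : ℝ} {f : ℝ × ℝ → ℝ}
    (hi : IntegrableOn f (Ioo 0 R ×ˢ Ioo (-a) a)) :
    ∫ x in Ioo 0 R ×ˢ Ioo (-a) a, f x
      = ∫ r in Ioo 0 R, ∫ z in Ioo (-a) a, f (r, z) := by
  rw [MeasureTheory.Measure.volume_eq_prod] at hi ⊢
  exact MeasureTheory.setIntegral_prod f hi

lemma rect_iter_zr {R a : ℝ} {f : ℝ × ℝ → ℝ}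
    (hi : IntegrableOn f (Ioo 0 R ×ˢ Ioo (-a) a)) :
    ∫ x in Ioo 0 R ×ˢ Ioo (-a) a, f x
      = ∫ z in Ioo (-a) a, ∫ r in Ioo 0 R, f (r, z) := by
  rw [rect_iter_rz hi]
  have hi2 : Integrable (Function.uncurry fun r z => f (r, z))
      ((volume.restrict (Ioo 0 R)).prod (volume.restrict (Ioo (-a) a))) := by
    rw [MeasureTheory.Measure.prod_restrict]
    rw [MeasureTheory.Measure.volume_eq_prod] at hi
    exact hi
  exact MeasureTheory.integral_integral_swap hi2
end Helpers

namespace Sm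
variable {u : ℝ → ℝ → ℝ}
lemma cont_r (hu : Sm u) (z : ℝ) : Continuous fun r => u r z :=
  hu.cont.comp (continuous_id.prodMk continuous_const)
lemma cont_z (hu : Sm u) (r : ℝ) : Continuous fun z => u r z :=
  hu.cont.comp (continuous_const.prodMk continuous_id)
end Sm

/-- FTC squared-antiderivative helper: `∫ f' f = (f b² − f a²)/2`. -/
lemma ftc_sq {f f' : ℝ → ℝ} (b : ℝ) (hd : ∀ y, HasDerivAt f (f' y) y)
    (hc : Continuous f') (hcf : Continuous f) :
    ∫ r in (0:ℝ)..b, f' r * f r = f b ^ 2 / 2 - f 0 ^ 2 / 2 := by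
  have hder : ∀ y ∈ uIcc (0:ℝ) b,
      HasDerivAt (fun r => f r ^ 2 / 2) (f' y * f y) y := by
    intro y _
    have h1 := ((hd y).fun_pow 2).div_const (2:ℝ)
    refine h1.congr_deriv ?_
    ring
  have hint : IntervalIntegrable (fun y => f' y * f y) volume 0 b :=
    (hc.mul hcf).intervalIntegrable _ _
  exact intervalIntegral.integral_eq_sub_of_hasDerivAt hder hint

lemma q_bound {R a : ℝ} {w : ℝ → ℝ → ℝ} (hw : Sm w)
    (hw0 : ∀ z ∈ Icc (-a) a, pr w 0 z = 0) :
    ∃ M : ℝ, 0 ≤ M ∧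
      ∀ x ∈ Ioo (0:ℝ) R ×ˢ Ioo (-a) a, |pr w x.1 x.2 / x.1| ≤ M := by
  obtain ⟨M, hM⟩ := (isCompact_Icc.prod isCompact_Icc :
      IsCompact (Icc (0:ℝ) R ×ˢ Icc (-a) a)).exists_bound_of_continuousOn
    (hw.pr'.pr'.cont.continuousOn)
  refine ⟨max M 0, le_max_right _ _, ?_⟩
  rintro ⟨r, z⟩ ⟨hr, hz⟩
  simp only at hr hz ⊢
  have hzIcc : z ∈ Icc (-a) a := Ioo_subset_Icc_self hz
  have hder : ∀ y ∈ Icc (0:ℝ) r,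
      HasDerivWithinAt (fun y => pr w y z) (pr (pr w) y z) (Icc 0 r) y :=
    fun y _ => ((hw.pr').hasDerivAt_pr y z).hasDerivWithinAt
  have hbd : ∀ y ∈ Ico (0:ℝ) r, ‖pr (pr w) y z‖ ≤ max M 0 := by
    intro y hy
    refine le_trans (hM (y, z) ⟨⟨hy.1, le_trans hy.2.le hr.2.le⟩, hzIcc⟩)
      (le_max_left _ _)
  have := norm_image_sub_le_of_norm_deriv_le_segment' hder hbd r
    ⟨le_of_lt hr.1, le_refl r⟩
  rw [hw0 z hzIcc, sub_zero, sub_zero, Real.norm_eq_abs] at this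
  rw [abs_div]
  rw [div_le_iff₀ (by simpa [abs_of_pos hr.1] using hr.1)]
  simpa [abs_of_pos hr.1] using this

lemma q_sq_integrable {R a : ℝ} {w : ℝ → ℝ → ℝ} (hw : Sm w)
    (hw0 : ∀ z ∈ Icc (-a) a, pr w 0 z = 0) :
    IntegrableOn (fun x : ℝ × ℝ => (pr w x.1 x.2 / x.1) ^ 2 * x.1)
      (Ioo 0 R ×ˢ Ioo (-a) a) := by
  obtain ⟨M, hM0, hM⟩ := q_bound (R := R) (a := a) hw hw0
  have hmeas : AEStronglyMeasurable (fun x : ℝ × ℝ => (pr w x.1 x.2 / x.1) ^ 2 * x.1)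
      (volume.restrict (Ioo 0 R ×ˢ Ioo (-a) a)) := by
    have h1 : Measurable fun x : ℝ × ℝ => pr w x.1 x.2 :=
      (hw.pr').cont.measurable
    exact (((h1.div measurable_fst).pow_const 2).mul measurable_fst).aestronglyMeasurable
  refine Integrable.mono' (g := fun _ => M ^ 2 * (|R| + |a|)) ?_ hmeas ?_
  · refine integrableOn_const (ne_of_lt ?_)
    calc volume (Ioo (0:ℝ) R ×ˢ Ioo (-a) a)
        ≤ volume (Icc (0:ℝ) R ×ˢ Icc (-a) a) :=
          measure_mono (prod_mono Ioo_subset_Icc_self Ioo_subset_Icc_self)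
      _ < ⊤ := (isCompact_Icc.prod isCompact_Icc).measure_lt_top
  · filter_upwards [ae_restrict_mem (rect_meas R a)] with x hx
    have h1 := hM x hx
    have hx1 : 0 < x.1 := hx.1.1
    have hx2 : x.1 < R := hx.1.2
    have : |(pr w x.1 x.2 / x.1) ^ 2 * x.1| ≤ M ^ 2 * |R| := by
      rw [abs_mul, abs_pow]
      have : |pr w x.1 x.2 / x.1| ^ 2 ≤ M ^ 2 := by
        exact pow_le_pow_left₀ (abs_nonneg _) h1 2
      have hxR : |x.1| ≤ |R| := by
        rw [abs_of_pos hx1, abs_of_pos (lt_trans hx1 hx2)]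
        exact hx2.le
      exact mul_le_mul this hxR (abs_nonneg _) (sq_nonneg _)
    refine le_trans this ?_
    have : (0:ℝ) ≤ M ^ 2 := sq_nonneg _
    nlinarith [abs_nonneg a]
section KeyIneq

variable {R a : ℝ}

lemma key_ineq (hR : 0 < R) (ha : 0 < a) (w : ℝ → ℝ → ℝ) (hw : Sm w)
    (hw0 : ∀ z ∈ Icc (-a) a, pr w 0 z = 0)
    (hwzS2 : ∀ r ∈ Ico 0 R, pz w r a = 0 ∧ pz w r (-a) = 0)
    (hwzR : ∀ z ∈ Ioo (-a) a, pz w R z = 0) :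
    9 * ∫ x in Ioo 0 R ×ˢ Ioo (-a) a, (pr w x.1 x.2 / x.1) ^ 2 * x.1
      ≤ ∫ x in Ioo 0 R ×ˢ Ioo (-a) a,
          (pr (pr w) x.1 x.2 + 3 * (pr w x.1 x.2 / x.1) + pz (pz w) x.1 x.2) ^ 2
            * x.1 := by
  set wr := pr w with hwr_def
  set wz := pz w with hwz_def
  set wrr := pr wr with hwrr_def
  set wzz := pz wz with hwzz_def
  set wrz := pr wz with hwrz_def
  set W3 := pr wrz with hW3_def
  have hwr : Sm wr := hw.pr'
  have hwz : Sm wz := hw.pz'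
  have hwrr : Sm wrr := hwr.pr'
  have hwzz : Sm wzz := hwz.pz'
  have hwrz : Sm wrz := hwz.pr'
  have hW3 : Sm W3 := hwrz.pr'
  have hA : pz wr = wrz := hw.clairaut
  have hB : pz wrr = W3 := (hwr.clairaut).trans (congrArg pr hA)
  have haa : -a ≤ a := by linarith
  set s := Ioo (0:ℝ) R ×ˢ Ioo (-a) a with hs_def
  have hsm : MeasurableSet s := rect_meas R a
  -- integrands
  set g1 : ℝ × ℝ → ℝ := fun x => (wr x.1 x.2 / x.1) ^ 2 * x.1 with hg1
  set gS2 : ℝ × ℝ → ℝ := fun x => wrr x.1 x.2 ^ 2 * x.1 + wzz x.1 x.2 ^ 2 * x.1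
    with hgS2
  set gS3 : ℝ × ℝ → ℝ := fun x => 6 * wrr x.1 x.2 * wr x.1 x.2 with hgS3
  set gS4 : ℝ × ℝ → ℝ :=
    fun x => 2 * wrr x.1 x.2 * wzz x.1 x.2 * x.1 + 6 * wr x.1 x.2 * wzz x.1 x.2
    with hgS4
  set g2 : ℝ × ℝ → ℝ :=
    fun x => -(2 * (W3 x.1 x.2 * wz x.1 x.2)) * x.1 - 6 * (wrz x.1 x.2 * wz x.1 x.2)
    with hg2
  -- integrability
  have hint_g1 : IntegrableOn (fun x : ℝ × ℝ => 9 * g1 x) s := by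
    exact (q_sq_integrable (R := R) (a := a) hw hw0).const_mul 9
  have hint_gS2 : IntegrableOn gS2 s := by
    apply integrableOn_rect_of_continuous
    have h1 := hwrr.cont
    have h2 := hwzz.cont
    fun_prop
  have hint_gS3 : IntegrableOn gS3 s := by
    apply integrableOn_rect_of_continuous
    have h1 := hwrr.cont
    have h2 := hwr.cont
    fun_prop
  have hint_gS4 : IntegrableOn gS4 s := by
    apply integrableOn_rect_of_continuous
    have h1 := hwrr.cont
    have h2 := hwzz.cont
    have h3 := hwr.cont
    fun_prop
  have hint_g2 : IntegrableOn g2 s := by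
    apply integrableOn_rect_of_continuous
    have h1 := hW3.cont
    have h2 := hwz.cont
    have h3 := hwrz.cont
    fun_prop
  -- pointwise expansion on s
  have hexp : EqOn (fun x : ℝ × ℝ => (wrr x.1 x.2 + 3 * (wr x.1 x.2 / x.1)
      + wzz x.1 x.2) ^ 2 * x.1)
      (fun x => 9 * g1 x + (gS2 x + (gS3 x + gS4 x))) s := by
    rintro ⟨r, z⟩ ⟨hr, hz⟩
    have hr0 : (r : ℝ) ≠ 0 := ne_of_gt hr.1
    simp only [hg1, hgS2, hgS3, hgS4]
    field_simp
    ring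
  rw [setIntegral_congr_fun hsm hexp]
  have h34 : IntegrableOn (fun x => gS3 x + gS4 x) s := hint_gS3.add hint_gS4
  have h234 : IntegrableOn (fun x => gS2 x + (gS3 x + gS4 x)) s := hint_gS2.add h34
  rw [integral_add hint_g1 h234, integral_add hint_gS2 h34,
    integral_add hint_gS3 hint_gS4, integral_const_mul]
  have hS2 : 0 ≤ ∫ x in s, gS2 x := by
    apply setIntegral_nonneg hsm
    rintro ⟨r, z⟩ ⟨hr, hz⟩
    have : (0:ℝ) ≤ r := hr.1.le
    simp only [hgS2]
    positivity
  have hS3 : 0 ≤ ∫ x in s, gS3 x := by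
    rw [hs_def, rect_iter_zr (hs_def ▸ hint_gS3)]
    apply setIntegral_nonneg measurableSet_Ioo
    intro z hz
    have hftc := ftc_sq (f := fun r => wr r z) (f' := fun r => wrr r z) R
      (fun y => hwr.hasDerivAt_pr y z) (hwrr.cont_r z) (hwr.cont_r z)
    have hval : ∫ r in Ioo (0:ℝ) R, gS3 (r, z)
        = 6 * (wr R z ^ 2 / 2 - wr 0 z ^ 2 / 2) := by
      rw [ioo_int_eq hR.le]
      simp only [hgS3, mul_assoc]
      rw [intervalIntegral.integral_const_mul, hftc]
    rw [hval, hw0 z (Ioo_subset_Icc_self hz)]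
    nlinarith [sq_nonneg (wr R z)]
  have hS4 : 0 ≤ ∫ x in s, gS4 x := by
    have hstep1 : ∫ x in s, gS4 x = ∫ x in s, g2 x := by
      rw [hs_def, rect_iter_rz (hs_def ▸ hint_gS4), rect_iter_rz (hs_def ▸ hint_g2)]
      apply setIntegral_congr_fun measurableSet_Ioo
      intro r hr
      dsimp only
      have hrIco : r ∈ Ico (0:ℝ) R := ⟨hr.1.le, hr.2⟩
      have hK1 : ∫ z' in (-a)..a, wrr r z' * wzz r z'
          = - ∫ z' in (-a)..a, W3 r z' * wz r z' := by
        have h := intervalIntegral.integral_mul_deriv_eq_deriv_mul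
          (a := -a) (b := a) (u := fun z' => wrr r z') (u' := fun z' => pz wrr r z')
          (v := fun z' => wz r z') (v' := fun z' => wzz r z')
          (fun x _ => hwrr.hasDerivAt_pz r x)
          (fun x _ => hwz.hasDerivAt_pz r x)
          (((hwrr.pz').cont_z r).intervalIntegrable _ _)
          ((hwzz.cont_z r).intervalIntegrable _ _)
        simp only [(hwzS2 r hrIco).1, (hwzS2 r hrIco).2, hB, mul_zero,
          zero_sub, sub_zero] at h
        rw [h]
      have hK2 : ∫ z' in (-a)..a, wr r z' * wzz r z'
          = - ∫ z' in (-a)..a, wrz r z' * wz r z' := by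
        have h := intervalIntegral.integral_mul_deriv_eq_deriv_mul
          (a := -a) (b := a) (u := fun z' => wr r z') (u' := fun z' => pz wr r z')
          (v := fun z' => wz r z') (v' := fun z' => wzz r z')
          (fun x _ => hwr.hasDerivAt_pz r x)
          (fun x _ => hwz.hasDerivAt_pz r x)
          (((hwr.pz').cont_z r).intervalIntegrable _ _)
          ((hwzz.cont_z r).intervalIntegrable _ _)
        simp only [(hwzS2 r hrIco).1, (hwzS2 r hrIco).2, hA, mul_zero,
          zero_sub, sub_zero] at h
        rw [h]
      rw [ioo_int_eq haa, ioo_int_eq haa]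
      have hL : (fun z' => gS4 (r, z'))
          = fun z' => (2 * r) * (wrr r z' * wzz r z') + 6 * (wr r z' * wzz r z') := by
        funext z'
        simp only [hgS4]
        ring
      have hRr : (fun z' => g2 (r, z'))
          = fun z' => (-(2 * r)) * (W3 r z' * wz r z') + (-6) * (wrz r z' * wz r z') := by
        funext z'
        simp only [hg2]
        ring
      rw [hL, hRr]
      rw [intervalIntegral.integral_add
          (by apply Continuous.intervalIntegrable
              have h1 := hwrr.cont_z r
              have h2 := hwzz.cont_z r
              fun_prop)
          (by apply Continuous.intervalIntegrable
              have h1 := hwr.cont_z r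
              have h2 := hwzz.cont_z r
              fun_prop),
        intervalIntegral.integral_add
          (by apply Continuous.intervalIntegrable
              have h1 := hW3.cont_z r
              have h2 := hwz.cont_z r
              fun_prop)
          (by apply Continuous.intervalIntegrable
              have h1 := hwrz.cont_z r
              have h2 := hwz.cont_z r
              fun_prop),
        intervalIntegral.integral_const_mul, intervalIntegral.integral_const_mul,
        intervalIntegral.integral_const_mul, intervalIntegral.integral_const_mul,
        hK1, hK2]
      ring
    rw [hstep1, hs_def, rect_iter_zr (hs_def ▸ hint_g2)]
    apply setIntegral_nonneg measurableSet_Ioo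
    intro z hz
    have hwzR' : wz R z = 0 := hwzR z hz
    have hJ2 : ∫ r' in (0:ℝ)..R, wrz r' z * wz r' z = wz R z ^ 2 / 2 - wz 0 z ^ 2 / 2 :=
      ftc_sq (f := fun r' => wz r' z) (f' := fun r' => wrz r' z) R
        (fun y => hwz.hasDerivAt_pr y z) (hwrz.cont_r z) (hwz.cont_r z)
    rw [hwzR'] at hJ2
    have hJ1 : ∫ r' in (0:ℝ)..R, W3 r' z * (wz r' z * r')
        = - ∫ r' in (0:ℝ)..R, wrz r' z * (wrz r' z * r' + wz r' z * 1) := by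
      have h := intervalIntegral.integral_mul_deriv_eq_deriv_mul
        (a := 0) (b := R) (u := fun r' => wrz r' z) (u' := fun r' => W3 r' z)
        (v := fun r' => wz r' z * r') (v' := fun r' => wrz r' z * r' + wz r' z * 1)
        (fun x _ => hwrz.hasDerivAt_pr x z)
        (fun x _ => (hwz.hasDerivAt_pr x z).mul (hasDerivAt_id x))
        ((hW3.cont_r z).intervalIntegrable _ _)
        (by apply Continuous.intervalIntegrable
            have h1 := hwrz.cont_r z
            have h2 := hwz.cont_r z
            fun_prop)
      simp only [hwzR', mul_zero, zero_mul, sub_zero, zero_sub] at h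
      linarith [h]
    have hJ4 : ∫ r' in (0:ℝ)..R, wrz r' z * (wrz r' z * r' + wz r' z * 1)
        = (∫ r' in (0:ℝ)..R, wrz r' z ^ 2 * r')
          + ∫ r' in (0:ℝ)..R, wrz r' z * wz r' z := by
      rw [← intervalIntegral.integral_add
        (by apply Continuous.intervalIntegrable
            have h1 := hwrz.cont_r z
            fun_prop)
        (by apply Continuous.intervalIntegrable
            have h1 := hwrz.cont_r z
            have h2 := hwz.cont_r z
            fun_prop)]
      congr 1
      funext r'
      ring
    have hJ3 : 0 ≤ ∫ r' in (0:ℝ)..R, wrz r' z ^ 2 * r' := by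
      apply intervalIntegral.integral_nonneg hR.le
      intro u hu
      exact mul_nonneg (sq_nonneg _) hu.1
    rw [ioo_int_eq hR.le]
    have hsplit : (fun r' => g2 (r', z))
        = fun r' => (-2) * (W3 r' z * (wz r' z * r')) + (-6) * (wrz r' z * wz r' z) := by
      funext r'
      simp only [hg2]
      ring
    rw [hsplit]
    rw [intervalIntegral.integral_add
        (by apply Continuous.intervalIntegrable
            have h1 := hW3.cont_r z
            have h2 := hwz.cont_r z
            fun_prop)
        (by apply Continuous.intervalIntegrable
            have h1 := hwrz.cont_r z
            have h2 := hwz.cont_r z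
            fun_prop),
      intervalIntegral.integral_const_mul, intervalIntegral.integral_const_mul]
    nlinarith [sq_nonneg (wz 0 z)]
  linarith

end KeyIneq


/-- Lemma 4.2, estimate (4.9): weighted `H³` estimate
`|(1/r)∂_r∂_zψ₁|_{2,Ω} ≤ c|∂_zΓ|_{2,Ω}` for the modified stream function. -/
theorem weighted_H3_estimate_psi1 :
    ∃ c : ℝ, 0 < c ∧
      ∀ (R a : ℝ), 0 < R → 0 < a → ∀ (ψ₁ Γ : ℝ → ℝ → ℝ),
        (ContDiff ℝ (⊤ : ℕ∞) fun x : ℝ × ℝ => ψ₁ x.1 x.2) →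
        (ContDiff ℝ (⊤ : ℕ∞) fun x : ℝ × ℝ => Γ x.1 x.2) →
        (∀ r z, r ∈ Ioo 0 R → z ∈ Ioo (-a) a →
          -(pr (pr ψ₁) r z + 1 / r * pr ψ₁ r z + pz (pz ψ₁) r z) - 2 / r * pr ψ₁ r z = Γ r z) →
        (∀ z, z ∈ Icc (-a) a → ψ₁ R z = 0) →
        (∀ r, r ∈ Icc 0 R → ψ₁ r a = 0 ∧ ψ₁ r (-a) = 0) →
        (∀ z, z ∈ Icc (-a) a → pr ψ₁ 0 z = 0) →
        (∀ r, r ∈ Ico 0 R → Γ r a = 0 ∧ Γ r (-a) = 0) →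
        (∀ r, r ∈ Ico 0 R → pz (pz ψ₁) r a = 0 ∧ pz (pz ψ₁) r (-a) = 0) →
        (∀ z, z ∈ Icc (-a) a → pz (pr ψ₁) 0 z = 0) →
        spNorm R a 2 (fun r z => pz (pr ψ₁) r z / r) ≤ c * spNorm R a 2 (pz Γ) := by
  refine ⟨1/3, by norm_num, ?_⟩
  intro R a hR ha ψ₁ Γ hψ hΓ heq hbcR hbcZ hbc0 hΓbc hzzbc hrz0
  have hsψ : Sm ψ₁ := hψ
  have hsΓ : Sm Γ := hΓ
  set s := Ioo (0:ℝ) R ×ˢ Ioo (-a) a with hs_def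
  set w : ℝ → ℝ → ℝ := pz ψ₁ with hw_def
  have hw : Sm w := hsψ.pz'
  have hcl : pz (pr ψ₁) = pr w := hsψ.clairaut
  -- boundary facts for key_ineq
  have hw0 : ∀ z ∈ Icc (-a) a, pr w 0 z = 0 := by
    intro z hz
    rw [← hcl]
    exact hrz0 z hz
  have hwzS2 : ∀ r ∈ Ico 0 R, pz w r a = 0 ∧ pz w r (-a) = 0 := fun r hr => hzzbc r hr
  have hψR : ∀ z ∈ Ioo (-a) a, pz ψ₁ R z = 0 := by
    intro z hz
    have hev : (fun y => ψ₁ R y) =ᶠ[nhds z] fun _ => (0:ℝ) :=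
      Filter.eventuallyEq_of_mem (Ioo_mem_nhds hz.1 hz.2)
        (fun y hy => hbcR y (Ioo_subset_Icc_self hy))
    show deriv (fun y => ψ₁ R y) z = 0
    rw [hev.deriv_eq, deriv_const]
  have hwzR : ∀ z ∈ Ioo (-a) a, pz w R z = 0 := by
    intro z hz
    have hev : (fun y => w R y) =ᶠ[nhds z] fun _ => (0:ℝ) :=
      Filter.eventuallyEq_of_mem (Ioo_mem_nhds hz.1 hz.2) (fun y hy => hψR y hy)
    show deriv (fun y => w R y) z = 0
    rw [hev.deriv_eq, deriv_const]
  -- equation for ∂_z Γ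
  have hpzΓ : ∀ r z, r ∈ Ioo 0 R → z ∈ Ioo (-a) a →
      pz Γ r z = -(pr (pr w) r z + 3 * (pr w r z / r) + pz (pz w) r z) := by
    intro r z hr hz
    have hr0 : (r:ℝ) ≠ 0 := ne_of_gt hr.1
    have hev : (fun y => Γ r y) =ᶠ[nhds z]
        (fun y => -(pr (pr ψ₁) r y + 1 / r * pr ψ₁ r y + pz (pz ψ₁) r y)
          - 2 / r * pr ψ₁ r y) :=
      Filter.eventuallyEq_of_mem (Ioo_mem_nhds hz.1 hz.2)
        (fun y hy => (heq r y hr hy).symm)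
    have h1 := (hsψ.pr'.pr').hasDerivAt_pz r z
    have h2 := (hsψ.pr').hasDerivAt_pz r z
    have h3 := (hsψ.pz'.pz').hasDerivAt_pz r z
    have hB : HasDerivAt
        (fun y => -(pr (pr ψ₁) r y + 1 / r * pr ψ₁ r y + pz (pz ψ₁) r y)
          - 2 / r * pr ψ₁ r y)
        (-(pz (pr (pr ψ₁)) r z + 1 / r * pz (pr ψ₁) r z + pz (pz (pz ψ₁)) r z)
          - 2 / r * pz (pr ψ₁) r z) z :=
      (((h1.add (h2.const_mul (1/r))).add h3).neg).sub (h2.const_mul (2/r))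
    have hd : pz Γ r z
        = -(pz (pr (pr ψ₁)) r z + 1 / r * pz (pr ψ₁) r z + pz (pz (pz ψ₁)) r z)
          - 2 / r * pz (pr ψ₁) r z := by
      show deriv (fun y => Γ r y) z = _
      rw [hev.deriv_eq]
      exact hB.deriv
    rw [hd]
    have e1 : pz (pr (pr ψ₁)) r z = pr (pr w) r z := by
      rw [(hsψ.pr').clairaut, hcl]
    have e2 : pz (pr ψ₁) r z = pr w r z := by rw [hcl]
    have e3 : pz (pz (pz ψ₁)) r z = pz (pz w) r z := rfl
    rw [e1, e2, e3]
    field_simp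
    ring
  -- spNorm conversions
  have hLHSfun : (fun r z => pz (pr ψ₁) r z / r) = fun r z => pr w r z / r := by
    funext r z
    rw [hcl]
  have hql := q_sq_integrable (R := R) (a := a) hw hw0
  have hLHS : spNorm R a 2 (fun r z => pz (pr ψ₁) r z / r)
      = Real.sqrt (∫ x in s, (pr w x.1 x.2 / x.1) ^ 2 * x.1) := by
    rw [hLHSfun, hs_def]
    apply spNorm_eq_sqrt
    · exact (((hw.pr').cont.measurable.comp measurable_id).div
        measurable_fst).aestronglyMeasurable
    · exact hql
  have hRHScont : Continuous fun x : ℝ × ℝ => pz Γ x.1 x.2 ^ 2 * x.1 := by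
    have h1 := (hsΓ.pz').cont
    fun_prop
  have hRHS : spNorm R a 2 (pz Γ)
      = Real.sqrt (∫ x in s, pz Γ x.1 x.2 ^ 2 * x.1) := by
    rw [hs_def]
    apply spNorm_eq_sqrt
    · exact (hsΓ.pz').cont.aestronglyMeasurable
    · exact integrableOn_rect_of_continuous hRHScont R a
  -- identify RHS integral with key_ineq right side
  have hcongrR : ∫ x in s, pz Γ x.1 x.2 ^ 2 * x.1
      = ∫ x in s, (pr (pr w) x.1 x.2 + 3 * (pr w x.1 x.2 / x.1)
          + pz (pz w) x.1 x.2) ^ 2 * x.1 := by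
    apply setIntegral_congr_fun (rect_meas R a)
    rintro ⟨r, z⟩ ⟨hr, hz⟩
    dsimp only
    rw [hpzΓ r z hr hz]
    ring
  have hkey := key_ineq hR ha w hw hw0 hwzS2 hwzR
  set IL := ∫ x in s, (pr w x.1 x.2 / x.1) ^ 2 * x.1 with hIL
  set IR := ∫ x in s, (pr (pr w) x.1 x.2 + 3 * (pr w x.1 x.2 / x.1)
      + pz (pz w) x.1 x.2) ^ 2 * x.1 with hIR
  have hILnn : 0 ≤ IL := by
    apply setIntegral_nonneg (rect_meas R a)
    rintro ⟨r, z⟩ ⟨hr, hz⟩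
    have : (0:ℝ) ≤ r := hr.1.le
    positivity
  have hIRnn : 0 ≤ IR := by
    apply setIntegral_nonneg (rect_meas R a)
    rintro ⟨r, z⟩ ⟨hr, hz⟩
    have : (0:ℝ) ≤ r := hr.1.le
    positivity
  rw [hLHS, hRHS, hcongrR]
  have hsq : Real.sqrt IL ≤ Real.sqrt (IR / 9) := Real.sqrt_le_sqrt (by linarith)
  calc Real.sqrt IL ≤ Real.sqrt (IR / 9) := hsq
    _ = Real.sqrt IR / 3 := by
        rw [Real.sqrt_div hIRnn 9,
          show (9:ℝ) = 3 ^ 2 by norm_num, Real.sqrt_sq (by norm_num : (0:ℝ) ≤ 3)]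
    _ = 1 / 3 * Real.sqrt IR := by ring

end
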